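/- If ⊢ ∇ (i.e., the empty environment entails the freshness environment ∇), then for every ground substitution φ all the freshness relations represented by φ(∇) hold (where a ground assertion a ≉ p represents the freshness relation a # NT⟦p⟧). -/

import Mathlib

set_option maxHeartbeats 1000000

/-- Atoms: a countably infinite set. -/
abbrev Atom : Type := ℕ

/-- The subgroup of `Equiv.Perm Atom` consisting of the finite permutations,
i.e. those moving only finitely many atoms. -/
def finPermSubgroup : Subgroup (Equiv.Perm Atom) where
  carrier := {π : Equiv.Perm Atom | {a : Atom | π a ≠ a}.Finite}
  one_mem' := by
    have h : {a : Atom | (1 : Equiv.Perm Atom) a ≠ a} = ∅ := by ext a; simp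
    simp only [Set.mem_setOf_eq, h]
    exact Set.finite_empty
  mul_mem' := by
    intro π σ hπ hσ
    refine (hπ.union hσ).subset ?_
    intro a ha
    simp only [Set.mem_setOf_eq, Equiv.Perm.mul_apply] at ha
    by_cases h : σ a = a
    · exact Or.inl (by simp only [Set.mem_setOf_eq]; rwa [h] at ha)
    · exact Or.inr h
  inv_mem' := by
    intro π hπ
    refine (hπ.image (⇑π⁻¹)).subset ?_
    intro a ha
    simp only [Set.mem_setOf_eq] at ha
    have h1 : π a ≠ a := by
      intro h
      apply ha
      conv_lhs => rw [← h]
      simp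
    exact ⟨π a, fun h => h1 (π.injective h), by simp⟩

/-- Finite permutations of atoms. -/
abbrev FinPerm : Type := finPermSubgroup

/-- The transposition of two atoms, as a finite permutation. -/
def swapPerm (a b : Atom) : FinPerm :=
  ⟨Equiv.swap a b, by
    refine ((Set.finite_singleton b).insert a).subset ?_
    intro x hx
    simp only [Set.mem_setOf_eq] at hx
    by_contra h
    simp only [Set.mem_insert_iff, Set.mem_singleton_iff, not_or] at h
    exact hx (Equiv.swap_apply_of_ne_of_ne h.1 h.2)⟩

/-- Raw terms over a nominal signature (with set of function symbols `F`) and a set `V`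
of variables: variables, atoms, moderated terms (explicit permutations), atom
abstractions, (binary-encoded, with empty product `unit`) products, and data built
with function symbols. -/
inductive RawTerm (V F : Type) : Type
  | var : V → RawTerm V F
  | atom : Atom → RawTerm V F
  | mod : FinPerm → RawTerm V F → RawTerm V F
  | abs : Atom → RawTerm V F → RawTerm V F
  | unit : RawTerm V F
  | pair : RawTerm V F → RawTerm V F → RawTerm V F
  | app : F → RawTerm V F → RawTerm V F

variable {V F : Type}

/-- The permutation action on raw terms: `π·x = x`, `π·a = π a`,
`π·(π₁·t) = (π ∘ π₁ ∘ π⁻¹)·(π·t)`, `π·[a]t = [π a](π·t)`, componentwise on products,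
`π·f(t) = f(π·t)`. -/
def permTerm (π : FinPerm) : RawTerm V F → RawTerm V F
  | .var x => .var x
  | .atom a => .atom (π.1 a)
  | .mod π₁ t => .mod (π * π₁ * π⁻¹) (permTerm π t)
  | .abs a t => .abs (π.1 a) (permTerm π t)
  | .unit => .unit
  | .pair t s => .pair (permTerm π t) (permTerm π s)
  | .app f t => .app f (permTerm π t)

/-- A raw term is ground iff no variables occur in it. -/
def IsGround : RawTerm V F → Prop
  | .var _ => False
  | .atom _ => True
  | .mod _ t => IsGround t
  | .abs _ t => IsGround t
  | .unit => True
  | .pair t s => IsGround t ∧ IsGround s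
  | .app _ t => IsGround t

/-- The extension `φ̄` of a substitution `φ` to raw terms, defined homomorphically. -/
def ext (φ : V → RawTerm V F) : RawTerm V F → RawTerm V F
  | .var x => φ x
  | .atom a => .atom a
  | .mod π t => .mod π (ext φ t)
  | .abs a t => .abs a (ext φ t)
  | .unit => .unit
  | .pair t s => .pair (ext φ t) (ext φ s)
  | .app f t => .app f (ext φ t)

/-- A substitution (i.e. a function from variables to raw terms; permutations act on it
by conjugation, fixing the variables) is finitely supported. -/
def FinSuppSubst (φ : V → RawTerm V F) : Prop :=
  ∃ A : Set Atom, A.Finite ∧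
    ∀ π : FinPerm, (∀ a ∈ A, π.1 a = a) → ∀ x, permTerm π (φ x) = φ x

/-- A set of atoms supports a substitution (w.r.t. the conjugation action on functions,
variables being fixed by permutations). -/
def SupportsSubst (A : Set Atom) (φ : V → RawTerm V F) : Prop :=
  ∀ π : FinPerm, (∀ a ∈ A, π.1 a = a) → ∀ x, permTerm π (φ x) = φ x

/-- A set of atoms supports a function from raw terms to raw terms
(w.r.t. the conjugation action on functions). -/
def SupportsFunRT (A : Set Atom) (g : RawTerm V F → RawTerm V F) : Prop :=
  ∀ π : FinPerm, (∀ a ∈ A, π.1 a = a) → ∀ t, permTerm π (g (permTerm π⁻¹ t)) = g t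

/-- A ground substitution: it maps every variable to a ground term. -/
def GroundSubst (φ : V → RawTerm V F) : Prop := ∀ x, IsGround (φ x)

/-- `freshN a p` expresses, for a ground term `p`, that the atom `a` is fresh in
(i.e. not in the support of) the nominal term `NT⟦p⟧` denoted by `p`. -/
def freshN (a : Atom) : RawTerm V F → Prop
  | .var _ => True
  | .atom b => a ≠ b
  | .mod π t => freshN (π⁻¹.1 a) t
  | .abs b t => a = b ∨ freshN a t
  | .unit => True
  | .pair t s => freshN a t ∧ freshN a s
  | .app _ t => freshN a t

attribute [local instance] Classical.propDecidable

/-- The normal form of a single freshness assertion `a ≉ t` under the simplification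
rules for freshness environments (`{a≉b} ⟹ ∅` for `a ≠ b`; `{a≉π·t} ⟹ {π⁻¹·a≉t}`;
`{a≉[b]p} ⟹ {a≉p}` for `a ≠ b`; `{a≉[a]p} ⟹ ∅`; products componentwise;
`{a≉f(p)} ⟹ {a≉p}`): a finite set of reduced assertions `a ≉ a` or `a ≉ x`. -/
noncomputable def nfA : Atom → RawTerm V F → Finset (Atom × RawTerm V F)
  | a, .var x => {(a, RawTerm.var x)}
  | a, .atom b => if a = b then {(a, RawTerm.atom a)} else ∅
  | a, .mod π t => nfA (π⁻¹.1 a) t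
  | a, .abs b t => if a = b then ∅ else nfA a t
  | _, .unit => ∅
  | a, .pair t s => nfA a t ∪ nfA a s
  | a, .app _ t => nfA a t

/-- The normal form `nf(∇)` of a freshness environment `∇` under the simplification
rules. -/
noncomputable def nfE (E : Finset (Atom × RawTerm V F)) :
    Finset (Atom × RawTerm V F) :=
  E.biUnion (fun p => nfA p.1 p.2)

/-- A freshness environment is inconsistent iff its normal form contains an
(inconsistent) assertion `a ≉ a`. -/
def InconsistentEnv (E : Finset (Atom × RawTerm V F)) : Prop :=
  ∃ a : Atom, (a, RawTerm.atom a) ∈ nfE E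

/-- Entailment of freshness environments: `∇ ⊢ ∇'` iff `∇` is inconsistent or
`nf(∇') ⊆ nf(∇)`. -/
def Entails (E E' : Finset (Atom × RawTerm V F)) : Prop :=
  InconsistentEnv E ∨ nfE E' ⊆ nfE E

theorem nfE_empty : nfE (∅ : Finset (Atom × RawTerm V F)) = ∅ := by
  simp [nfE]

theorem not_inconsistentEnv_empty : ¬InconsistentEnv (∅ : Finset (Atom × RawTerm V F)) := by
  simp [InconsistentEnv, nfE_empty]

theorem nfA_eq_empty_of_entails_empty {E : Finset (Atom × RawTerm V F)}
    (h : Entails ∅ E) {p : Atom × RawTerm V F} (hp : p ∈ E) : nfA p.1 p.2 = ∅ := by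
  rcases h with hinc | hsub
  · exact absurd hinc not_inconsistentEnv_empty
  · rw [nfE_empty, nfE, Finset.biUnion_subset] at hsub
    exact Finset.subset_empty.mp (hsub p hp)

/-- A variable never simplifies away, so `nfA a t = ∅` puts every variable of `t` under an
abstraction `[a]_`, where whatever is substituted for it cannot make `a` free. -/
theorem freshN_ext_of_nfA_eq_empty (φ : V → RawTerm V F) {a : Atom} {t : RawTerm V F}
    (h : nfA a t = ∅) : freshN a (ext φ t) := by
  induction t generalizing a with
  | var x => simp [nfA] at h
  | atom b => rintro rfl; simp [nfA] at h
  | mod π t ih => exact ih h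
  | abs b t ih =>
    by_cases hab : a = b
    · exact Or.inl hab
    · rw [nfA, if_neg hab] at h
      exact Or.inr (ih h)
  | unit => trivial
  | pair t s iht ihs =>
    rw [nfA, Finset.union_eq_empty] at h
    exact ⟨iht h.1, ihs h.2⟩
  | app f t ih => exact ih h

theorem entailed_by_empty_holds_general {V F : Type} (E : Finset (Atom × RawTerm V F))
    (h : Entails (∅ : Finset (Atom × RawTerm V F)) E)
    (φ : V → RawTerm V F) :
    ∀ p ∈ E, freshN p.1 (ext φ p.2) :=
  fun _ hp => freshN_ext_of_nfA_eq_empty φ (nfA_eq_empty_of_entails_empty h hp)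

/-- If `⊢ ∇` (the empty environment entails `∇`), then for every
ground substitution `φ` all the freshness relations represented by `φ(∇)` hold
(a ground assertion `a ≉ p` representing the freshness relation `a # NT⟦p⟧`). -/
theorem entailed_by_empty_holds {V F : Type} (E : Finset (Atom × RawTerm V F))
    (h : Entails (∅ : Finset (Atom × RawTerm V F)) E)
    (φ : V → RawTerm V F) (hφ : GroundSubst φ) :
    ∀ p ∈ E, freshN p.1 (ext φ p.2) :=
  entailed_by_empty_holds_general E h φ
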